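/- arXiv:2604.03078 — 6 statements merged into one kernel-verified Lean document; each statement's English description precedes it below -/
import Mathlib

section
/- Every partition of N = {1,…,n} into nonempty capacity-feasible bins can be represented by an assignment x : N × N → {0,1} satisfying Σ_k x_i^k = 1 for all i, the capacity constraints Σ_i w_i x_i^k ≤ W x_k^k for all k, and the symmetry-breaking constraints x_i^k = 0 for i < k and x_j^i ≤ x_i^i for i < j, with the same number of used bins and the same co-location structure of item pairs. -/
open Finset

/-- Every partition of `{1,…,n}` into nonempty, disjoint, capacity-feasible
bins can be represented by a binary assignment `x` satisfying the partition,
capacity and symmetry-breaking constraints, with the same number of used bins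
and the same co-location structure. -/
theorem symmetry_breaking_validity
    (n : ℕ) (w : Fin n → ℝ) (W : ℝ) (hw : ∀ i, 0 < w i)
    (m : ℕ) (B : Fin m → Finset (Fin n))
    (hne : ∀ k, (B k).Nonempty)
    (hdisj : ∀ k l, k ≠ l → Disjoint (B k) (B l))
    (hcover : Finset.univ.biUnion B = Finset.univ)
    (hcap : ∀ k, ∑ i ∈ B k, w i ≤ W) :
    ∃ x : Fin n → Fin n → ℝ,
      (∀ i k, x i k = 0 ∨ x i k = 1) ∧
      (∀ i, ∑ k, x i k = 1) ∧
      (∀ k, ∑ i, w i * x i k ≤ W * x k k) ∧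
      (∀ i k : Fin n, i < k → x i k = 0) ∧
      (∀ i j : Fin n, i < j → x j i ≤ x i i) ∧
      Set.ncard {k : Fin n | x k k = 1} = m ∧
      (∀ i j : Fin n, (∃ k, x i k = 1 ∧ x j k = 1) ↔ (∃ k, i ∈ B k ∧ j ∈ B k)) := by
  classical
  have hbin : ∀ i : Fin n, ∃ k, i ∈ B k := by
    intro i
    have : i ∈ Finset.univ.biUnion B := by rw [hcover]; exact mem_univ i
    simpa using this
  let bin : Fin n → Fin m := fun i => (hbin i).choose
  have hmem : ∀ i, i ∈ B (bin i) := fun i => (hbin i).choose_spec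
  have huniq : ∀ i k, i ∈ B k → k = bin i := by
    intro i k hk
    by_contra h
    exact Finset.disjoint_left.mp (hdisj k (bin i) h) hk (hmem i)
  let rep : Fin n → Fin n := fun i => (B (bin i)).min' (hne _)
  have hrep_mem : ∀ i, rep i ∈ B (bin i) := fun i => Finset.min'_mem _ _
  have hrep_le : ∀ i, rep i ≤ i := fun i => Finset.min'_le _ i (hmem i)
  have hbin_rep : ∀ i, bin (rep i) = bin i := fun i => (huniq _ _ (hrep_mem i)).symm
  have hrep_rep : ∀ i, rep (rep i) = rep i := by
    intro i; simp only [rep, hbin_rep]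
  have hrep_congr : ∀ i j, bin i = bin j → rep i = rep j := by
    intro i j h; simp only [rep, h]
  have hrep_bin : ∀ i j, rep i = rep j → bin i = bin j := by
    intro i j h
    have := hrep_mem i
    rw [h] at this
    rw [← hbin_rep j, ← huniq _ _ this]
  let x : Fin n → Fin n → ℝ := fun i k => if rep i = k then 1 else 0
  have hx01 : ∀ i k, x i k = 0 ∨ x i k = 1 := by
    intro i k; by_cases h : rep i = k <;> simp [x, h]
  refine ⟨x, hx01, ?_, ?_, ?_, ?_, ?_, ?_⟩
  · intro i
    simp [x, Finset.sum_ite_eq]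
  · intro k
    by_cases hk : rep k = k
    · have hxkk : x k k = 1 := by simp [x, hk]
      rw [hxkk, mul_one]
      have : ∑ i, w i * x i k = ∑ i ∈ B (bin k), w i := by
        rw [← Finset.sum_filter_add_sum_filter_not Finset.univ (fun i => rep i = k)
            (fun i => w i * x i k)]
        have h1 : ∀ i ∈ Finset.univ.filter (fun i => rep i = k), w i * x i k = w i := by
          intro i hi
          simp only [mem_filter] at hi
          simp [x, hi.2]
        have h2 : ∀ i ∈ Finset.univ.filter (fun i => ¬ rep i = k), w i * x i k = 0 := by
          intro i hi
          simp only [mem_filter] at hi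
          simp [x, hi.2]
        rw [Finset.sum_congr rfl h1, Finset.sum_congr rfl h2, Finset.sum_const_zero, add_zero]
        apply Finset.sum_congr _ (fun _ _ => rfl)
        ext i
        simp only [mem_filter, mem_univ, true_and]
        constructor
        · intro h
          have hb : bin i = bin k := hrep_bin i k (h.trans hk.symm)
          rw [← hb]; exact hmem i
        · intro h
          have : bin i = bin k := (huniq i (bin k) h).symm
          rw [hrep_congr i k this, hk]
      rw [this]; exact hcap _
    · have hxkk : x k k = 0 := by simp [x, hk]
      rw [hxkk, mul_zero]
      have : ∀ i, w i * x i k = 0 := by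
        intro i
        have : rep i ≠ k := by
          intro h
          apply hk
          rw [← h, hrep_rep]
        simp [x, this]
      simp [this]
  · intro i k hik
    have : rep i ≠ k := fun h => absurd (h ▸ hrep_le i) (not_le.mpr hik)
    simp [x, this]
  · intro i j hij
    by_cases h : rep j = i
    · have : rep i = i := by rw [← h, hrep_rep]
      simp [x, h, this]
    · have h0 : x j i = 0 := by simp [x, h]
      rw [h0]
      rcases hx01 i i with h1 | h1 <;> rw [h1] <;> norm_num
  · let μ : Fin m → Fin n := fun l => (B l).min' (hne l)
    have hbinμ : ∀ l, bin (μ l) = l := fun l => (huniq _ _ (Finset.min'_mem _ _)).symm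
    have hrepμ : ∀ l, rep (μ l) = μ l := by
      intro l; simp only [rep, μ, hbinμ]
    have hset : {k : Fin n | x k k = 1} = ↑(Finset.univ.image μ) := by
      ext k
      simp only [Set.mem_setOf_eq, Finset.coe_image, Set.mem_image, Finset.mem_coe, mem_univ,
        Finset.coe_univ, Set.image_univ, Set.mem_range]
      constructor
      · intro h
        have hk : rep k = k := by
          by_contra hk
          simp [x, hk] at h
        exact ⟨bin k, hk⟩
      · rintro ⟨l, rfl⟩
        simp [x, hrepμ]
    rw [hset, Set.ncard_coe_finset]
    rw [Finset.card_image_of_injective _ ?_, Finset.card_univ, Fintype.card_fin]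
    intro a b hab
    have := hbinμ a
    rw [hab, hbinμ] at this
    exact this.symm
  · intro i j
    constructor
    · rintro ⟨k, hik, hjk⟩
      have hi : rep i = k := by by_contra h; simp [x, h] at hik
      have hj : rep j = k := by by_contra h; simp [x, h] at hjk
      have hb : bin i = bin j := hrep_bin i j (hi.trans hj.symm)
      exact ⟨bin j, hb ▸ hmem i, hmem j⟩
    · rintro ⟨k, hik, hjk⟩
      have hbi : bin i = k := (huniq i k hik).symm
      have hbj : bin j = k := (huniq j k hjk).symm
      have : rep i = rep j := hrep_congr i j (hbi.trans hbj.symm)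
      exact ⟨rep j, by simp [x, this], by simp [x]⟩
end

section
/- Under the representative formulation constraints, with binary variables r_j and z_{ij} (i < j) satisfying the triangle inequalities, r_j + z_{ij} ≤ 1 for all i < j, and r_j + Σ_{i<j} z_{ij} ≥ 1 for all j, it holds that r_j = 1 if and only if j is the minimum element of its equivalence class under the relation induced by z. -/
open Finset

/-- In the representative formulation, with binary `r` and `z` satisfying the
triangle inequalities, `r j + z i j ≤ 1` for `i < j`, and
`r j + Σ_{i<j} z i j ≥ 1`, the variable `r j` equals `1` iff `j` is the minimum
element of its class under the co-location relation induced by `z`. -/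
theorem representative_iff_class_minimum
    (n : ℕ) (r : Fin n → ℝ) (z : Fin n → Fin n → ℝ)
    (hrbin : ∀ j, r j = 0 ∨ r j = 1)
    (hzbin : ∀ i j : Fin n, i < j → (z i j = 0 ∨ z i j = 1))
    (htri1 : ∀ i j k : Fin n, i < j → j < k → z i j + z i k - z j k ≤ 1)
    (htri2 : ∀ i j k : Fin n, i < j → j < k → z i j + z j k - z i k ≤ 1)
    (htri3 : ∀ i j k : Fin n, i < j → j < k → z i k + z j k - z i j ≤ 1)
    (hrep1 : ∀ i j : Fin n, i < j → r j + z i j ≤ 1)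
    (hrep2 : ∀ j : Fin n, 1 ≤ r j + ∑ i ∈ Finset.univ.filter (fun i => i < j), z i j) :
    ∀ j : Fin n, r j = 1 ↔
      (∀ i : Fin n, (i = j ∨ z (min i j) (max i j) = 1) → j ≤ i) := by
  intro j
  constructor
  · intro hrj i hi
    by_contra hji
    have hij : i < j := lt_of_not_ge hji
    rcases hi with h | h
    · exact hij.ne h
    · have h1 := hrep1 i j hij
      rw [hrj] at h1
      rw [min_eq_left hij.le, max_eq_right hij.le] at h
      linarith
  · intro h
    rcases hrbin j with h0 | h1
    · exfalso
      have hs := hrep2 j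
      rw [h0, zero_add] at hs
      have hex : ∃ i ∈ Finset.univ.filter (fun i => i < j), z i j ≠ 0 := by
        by_contra hc
        push_neg at hc
        have hz0 : ∑ i ∈ Finset.univ.filter (fun i => i < j), z i j = 0 :=
          Finset.sum_eq_zero fun i hi => hc i hi
        linarith
      obtain ⟨i, hi, hzi⟩ := hex
      have hij : i < j := (Finset.mem_filter.mp hi).2
      have hz1 : z i j = 1 := (hzbin i j hij).resolve_left hzi
      have hle := h i (Or.inr (by rw [min_eq_left hij.le, max_eq_right hij.le]; exact hz1))
      exact absurd hle (not_le.mpr hij)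
    · exact h1
end

section
/- In the representative formulation, Σ_{j∈N} r_j equals the number of bins (equivalence classes) of the partition induced by z, provided r and z are binary and satisfy the triangle inequalities and the representative constraints r_j + z_{ij} ≤ 1 (i < j) and r_j + Σ_{i<j} z_{ij} ≥ 1. -/
open Finset

/-- In the representative formulation, `Σ_j r j` equals the number of
equivalence classes of the partition induced by `z`, provided `r` and `z` are
binary and satisfy the triangle inequalities and the representative
constraints. -/
theorem sum_representatives_eq_number_of_classes
    (n : ℕ) (r : Fin n → ℝ) (z : Fin n → Fin n → ℝ)
    (hrbin : ∀ j, r j = 0 ∨ r j = 1)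
    (hzbin : ∀ i j : Fin n, i < j → (z i j = 0 ∨ z i j = 1))
    (htri1 : ∀ i j k : Fin n, i < j → j < k → z i j + z i k - z j k ≤ 1)
    (htri2 : ∀ i j k : Fin n, i < j → j < k → z i j + z j k - z i k ≤ 1)
    (htri3 : ∀ i j k : Fin n, i < j → j < k → z i k + z j k - z i j ≤ 1)
    (hrep1 : ∀ i j : Fin n, i < j → r j + z i j ≤ 1)
    (hrep2 : ∀ j : Fin n, 1 ≤ r j + ∑ i ∈ Finset.univ.filter (fun i => i < j), z i j) :
    ∑ j, r j =
      (Set.ncard {S : Set (Fin n) |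
        ∃ i : Fin n, S = {j : Fin n | i = j ∨ z (min i j) (max i j) = 1}} : ℝ) := by
  classical
  -- the relation
  set R : Fin n → Fin n → Prop := fun i j => i = j ∨ z (min i j) (max i j) = 1 with hR
  set f : Fin n → Set (Fin n) := fun i => {j : Fin n | i = j ∨ z (min i j) (max i j) = 1}
    with hf
  have hmemf : ∀ i j, j ∈ f i ↔ R i j := by intro i j; rfl
  -- forcing 1
  have hforce : ∀ p q : Fin n, p < q → 1 ≤ z p q → z p q = 1 := by
    intro p q hpq h
    rcases hzbin p q hpq with h0 | h1
    · rw [h0] at h; linarith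
    · exact h1
  -- unfold R for ordered pairs
  have hRlt : ∀ p q : Fin n, p < q → (R p q ↔ z p q = 1) := by
    intro p q hpq
    constructor
    · rintro (h | h)
      · exact absurd h (ne_of_lt hpq)
      · rwa [min_eq_left hpq.le, max_eq_right hpq.le] at h
    · intro h; right; rwa [min_eq_left hpq.le, max_eq_right hpq.le]
  have hRgt : ∀ p q : Fin n, q < p → (R p q ↔ z q p = 1) := by
    intro p q hpq
    constructor
    · rintro (h | h)
      · exact absurd h.symm (ne_of_lt hpq)
      · rwa [min_eq_right hpq.le, max_eq_left hpq.le] at h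
    · intro h; right; rwa [min_eq_right hpq.le, max_eq_left hpq.le]
  have hRsymm : ∀ p q : Fin n, R p q → R q p := by
    rintro p q (h | h)
    · exact Or.inl h.symm
    · right; rwa [min_comm, max_comm]
  -- transitivity
  have hRtrans : ∀ a b c : Fin n, R a b → R b c → R a c := by
    intro a b c hab hbc
    rcases eq_or_ne a b with rfl | hab' ; · exact hbc
    rcases eq_or_ne b c with rfl | hbc' ; · exact hab
    rcases eq_or_ne a c with rfl | hac' ; · exact Or.inl rfl
    rcases lt_trichotomy a b with h1 | h1 | h1
    · rcases lt_trichotomy b c with h2 | h2 | h2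
      · -- a < b < c
        have z1 := (hRlt a b h1).1 hab
        have z2 := (hRlt b c h2).1 hbc
        have := htri2 a b c h1 h2
        exact (hRlt a c (h1.trans h2)).2 (hforce a c (h1.trans h2) (by linarith))
      · exact absurd h2 hbc'
      · rcases lt_trichotomy a c with h3 | h3 | h3
        · -- a < c < b
          have z1 := (hRlt a b h1).1 hab
          have z2 := (hRgt b c h2).1 hbc
          have := htri3 a c b h3 h2
          exact (hRlt a c h3).2 (hforce a c h3 (by linarith))
        · exact absurd h3 hac'
        · -- c < a < b
          have z1 := (hRlt a b h1).1 hab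
          have z2 := (hRgt b c h2).1 hbc
          have := htri3 c a b h3 h1
          exact (hRgt a c h3).2 (hforce c a h3 (by linarith))
    · exact absurd h1 hab'
    · rcases lt_trichotomy b c with h2 | h2 | h2
      · rcases lt_trichotomy a c with h3 | h3 | h3
        · -- b < a < c
          have z1 := (hRgt a b h1).1 hab
          have z2 := (hRlt b c h2).1 hbc
          have := htri1 b a c h1 h3
          exact (hRlt a c h3).2 (hforce a c h3 (by linarith))
        · exact absurd h3 hac'
        · -- b < c < a
          have z1 := (hRgt a b h1).1 hab
          have z2 := (hRlt b c h2).1 hbc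
          have := htri1 b c a h2 h3
          exact (hRgt a c h3).2 (hforce c a h3 (by linarith))
      · exact absurd h2 hbc'
      · -- c < b < a
        have z1 := (hRgt a b h1).1 hab
        have z2 := (hRgt b c h2).1 hbc
        have := htri2 c b a h2 h1
        exact (hRgt a c (h2.trans h1)).2 (hforce c a (h2.trans h1) (by linarith))
  -- characterization of r
  have hr1 : ∀ j : Fin n, r j = 1 ↔ ∀ i, i < j → z i j ≠ 1 := by
    intro j
    constructor
    · intro hrj i hij hz
      have := hrep1 i j hij
      rw [hrj, hz] at this; linarith
    · intro h
      have hsum : ∑ i ∈ Finset.univ.filter (fun i => i < j), z i j = 0 := by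
        apply Finset.sum_eq_zero
        intro i hi
        rw [Finset.mem_filter] at hi
        rcases hzbin i j hi.2 with h0 | h1
        · exact h0
        · exact absurd h1 (h i hi.2)
      have := hrep2 j
      rw [hsum] at this
      rcases hrbin j with h0 | h1
      · rw [h0] at this; linarith
      · exact h1
  -- sum = card of representatives
  have hsum : ∑ j, r j = ((Finset.univ.filter (fun j => r j = 1)).card : ℝ) := by
    rw [← Finset.sum_boole]
    apply Finset.sum_congr rfl
    intro j _
    rcases hrbin j with h0 | h1
    · simp [h0]
    · simp [h1]
  rw [hsum]
  -- the class set is the image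
  have hset : {S : Set (Fin n) |
      ∃ i : Fin n, S = {j : Fin n | i = j ∨ z (min i j) (max i j) = 1}}
      = ↑(Finset.univ.image f) := by
    ext S
    simp only [Set.mem_setOf_eq, Finset.coe_image, Finset.coe_univ, Set.image_univ,
      Set.mem_range]
    exact ⟨fun ⟨i, h⟩ => ⟨i, h.symm⟩, fun ⟨i, h⟩ => ⟨i, h.symm⟩⟩
  rw [hset, Set.ncard_coe_finset]
  congr 1
  -- bijection between representatives and classes
  apply Finset.card_bij (fun a _ => f a)
  · intro a _
    exact Finset.mem_image_of_mem f (Finset.mem_univ a)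
  · intro a ha b hb hfab
    rw [Finset.mem_filter] at ha hb
    by_contra hne
    rcases lt_or_gt_of_ne hne with h | h
    · have : a ∈ f b := by rw [← hfab]; exact Or.inl rfl
      have hz := (hRgt b a h).1 ((hmemf b a).1 this)
      exact (hr1 b).1 hb.2 a h hz
    · have : b ∈ f a := by rw [hfab]; exact Or.inl rfl
      have hz := (hRgt a b h).1 ((hmemf a b).1 this)
      exact (hr1 a).1 ha.2 b h hz
  · intro S hS
    rw [Finset.mem_image] at hS
    obtain ⟨i, _, hi⟩ := hS
    set T := Finset.univ.filter (fun k => R i k) with hT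
    have hTne : T.Nonempty := ⟨i, by simp [hT, hR]⟩
    set j := T.min' hTne with hj
    have hjT : j ∈ T := T.min'_mem hTne
    have hRij : R i j := (Finset.mem_filter.1 hjT).2
    refine ⟨j, ?_, ?_⟩
    · rw [Finset.mem_filter]
      refine ⟨Finset.mem_univ j, (hr1 j).2 ?_⟩
      intro i' hi'j hz
      have hRji' : R j i' := (hRgt j i' hi'j).2 hz
      have : i' ∈ T := by
        rw [Finset.mem_filter]
        exact ⟨Finset.mem_univ i', hRtrans i j i' hRij hRji'⟩
      exact absurd (T.min'_le i' this) (not_le.2 hi'j)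
    · rw [← hi]
      ext k
      rw [hmemf, hmemf]
      exact ⟨fun h => hRtrans i j k hRij h,
        fun h => hRtrans j i k (hRsymm i j hRij) h⟩
end

section
/- Validity of the aggregated RLT cut: if x encodes a capacity-feasible partition with symmetry-broken bin indexing (each bin indexed by its minimal item), z_{ij} = 1 iff i and j share a bin, and x̃_{kj}^k = 1 iff item j is in the bin whose representative is k, then for every item j: Σ_{i≠j} w_i z_{ij} ≤ W·Σ_k x̃_{kj}^k − w_j, and since Σ_k x̃_{kj}^k = 1 (each item belongs to exactly one represented bin), this reduces to Σ_{i≠j} w_i z_{ij} ≤ W − w_j. -/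
open Finset

/-- Validity of the aggregated RLT cut in the extended two-index formulation:
if the partition is capacity-feasible, `z i j = 1` iff distinct `i`, `j` share
a bin, and `x̃ k j = 1` iff item `j` lies in the bin whose representative
(minimum element) is `k`, then for every item `j`:
`Σ_{i≠j} w i * z i j ≤ W * Σ_k x̃ k j − w j`, with `Σ_k x̃ k j = 1`, and hence
`Σ_{i≠j} w i * z i j ≤ W − w j`. -/
theorem aggregated_rlt_cut_valid
    (n : ℕ) (w : Fin n → ℝ) (W : ℝ) (hw : ∀ i, 0 < w i)
    (m : ℕ) (B : Fin m → Finset (Fin n))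
    (hne : ∀ k, (B k).Nonempty)
    (hdisj : ∀ k l, k ≠ l → Disjoint (B k) (B l))
    (hcover : Finset.univ.biUnion B = Finset.univ)
    (hcap : ∀ k, ∑ i ∈ B k, w i ≤ W)
    (z : Fin n → Fin n → ℝ)
    (hz1 : ∀ i j : Fin n, z i j = 1 ↔ (i ≠ j ∧ ∃ k, i ∈ B k ∧ j ∈ B k))
    (hzbin : ∀ i j : Fin n, z i j = 0 ∨ z i j = 1)
    (xt : Fin n → Fin n → ℝ)
    (hxt1 : ∀ k j : Fin n, xt k j = 1 ↔
      (∃ l, j ∈ B l ∧ k ∈ B l ∧ ∀ i ∈ B l, k ≤ i))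
    (hxtbin : ∀ k j : Fin n, xt k j = 0 ∨ xt k j = 1) :
    ∀ j : Fin n,
      (∑ i ∈ Finset.univ.erase j, w i * z i j ≤ W * (∑ k, xt k j) - w j) ∧
      (∑ k, xt k j) = 1 ∧
      ∑ i ∈ Finset.univ.erase j, w i * z i j ≤ W - w j := by
  intro j
  -- j lies in some bin
  obtain ⟨l, -, hjl⟩ : ∃ l ∈ Finset.univ, j ∈ B l := by
    have : j ∈ Finset.univ.biUnion B := by rw [hcover]; exact Finset.mem_univ j
    simpa using this
  -- representative of that bin
  set k0 := (B l).min' (hne l) with hk0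
  have hk0mem : k0 ∈ B l := (B l).min'_mem (hne l)
  have hk0min : ∀ i ∈ B l, k0 ≤ i := fun i hi => (B l).min'_le i hi
  -- sum of xt = 1
  have hsum1 : (∑ k, xt k j) = 1 := by
    rw [Finset.sum_eq_single k0]
    · exact (hxt1 k0 j).2 ⟨l, hjl, hk0mem, hk0min⟩
    · intro k _ hk
      rcases hxtbin k j with h | h
      · exact h
      · exfalso
        obtain ⟨l', hjl', hkl', hmin'⟩ := (hxt1 k j).1 h
        have hll : l' = l := by
          by_contra hne'
          exact (Finset.disjoint_left.1 (hdisj l' l hne')) hjl' hjl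
        subst hll
        exact hk (le_antisymm (hmin' k0 hk0mem) (hk0min k hkl'))
    · intro h; exact absurd (Finset.mem_univ k0) h
  -- sum of w*z equals sum over bin minus w j
  have hzsum : ∑ i ∈ Finset.univ.erase j, w i * z i j = ∑ i ∈ (B l).erase j, w i := by
    rw [← Finset.sum_subset (Finset.erase_subset_erase j ((B l).subset_univ))]
    · apply Finset.sum_congr rfl
      intro i hi
      have hij : i ≠ j := Finset.ne_of_mem_erase hi
      have hiB : i ∈ B l := Finset.mem_of_mem_erase hi
      rw [(hz1 i j).2 ⟨hij, l, hiB, hjl⟩, mul_one]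
    · intro i hi hni
      have hij : i ≠ j := Finset.ne_of_mem_erase hi
      have hiB : i ∉ B l := fun h => hni (Finset.mem_erase.2 ⟨hij, h⟩)
      rcases hzbin i j with h | h
      · rw [h, mul_zero]
      · exfalso
        obtain ⟨-, l', hil', hjl'⟩ := (hz1 i j).1 h
        have : l' = l := by
          by_contra hne'
          exact (Finset.disjoint_left.1 (hdisj l' l hne')) hjl' hjl
        exact hiB (this ▸ hil')
  have hle : ∑ i ∈ Finset.univ.erase j, w i * z i j ≤ W - w j := by
    rw [hzsum]
    have := Finset.sum_erase_add (B l) w hjl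
    have hcapl := hcap l
    linarith
  refine ⟨?_, hsum1, hle⟩
  rw [hsum1, mul_one]
  exact hle
end

section
/- Branch-and-bound upper bound (Proposition 1 of the paper): Let I, U ⊆ N be disjoint, and let P be a capacity-feasible pattern with I ⊆ P ⊆ I ∪ U. For each i ∈ U, define p̄_i = π_i + Σ_{j∈I} p_{ij} + (1/2)·z(KP_i), where z(KP_i) is the optimal value of the 0-1 knapsack with item set U \ {i}, profits p_{ij}⁺ = max{0, p_{ij}}, weights w_j, and capacity W − Σ_{j∈I} w_j − w_i. Then p(P) ≤ p(I) + Σ_{i∈P∩U} p̄_i, where p(A) = Σ_{i∈A} π_i + Σ_{i<j∈A} p_{ij}. -/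
open Finset

/-- Total profit of a pattern `A`: linear profits plus pairwise profits over
unordered pairs. -/
def patternProfit (n : ℕ) (π : Fin n → ℝ) (p : Fin n → Fin n → ℝ)
    (A : Finset (Fin n)) : ℝ :=
  ∑ i ∈ A, π i + ∑ i ∈ A, ∑ j ∈ A.filter (fun j => i < j), p i j

private lemma half_sum (n : ℕ) (p : Fin n → Fin n → ℝ)
    (hsymm : ∀ i j, p i j = p j i) (A : Finset (Fin n)) :
    ∑ i ∈ A, ∑ j ∈ A.filter (fun j => i < j), p i j
      = (1 / 2) * ∑ i ∈ A, ∑ j ∈ A.erase i, p i j := by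
  have hsplit : ∀ i ∈ A, ∑ j ∈ A.erase i, p i j
      = ∑ j ∈ A.filter (fun j => i < j), p i j
        + ∑ j ∈ A.filter (fun j => j < i), p i j := by
    intro i _
    rw [← Finset.sum_union]
    · apply Finset.sum_congr _ (fun _ _ => rfl)
      ext j
      simp only [mem_erase, mem_union, mem_filter]
      constructor
      · rintro ⟨hne, hj⟩
        rcases lt_or_gt_of_ne (Ne.symm hne) with h | h
        · exact Or.inl ⟨hj, h⟩
        · exact Or.inr ⟨hj, h⟩
      · rintro (⟨hj, h⟩ | ⟨hj, h⟩)
        · exact ⟨ne_of_gt h, hj⟩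
        · exact ⟨ne_of_lt h, hj⟩
    · rw [Finset.disjoint_filter]
      intro x _ h1 h2
      exact absurd (lt_trans h2 h1) (lt_irrefl x)
  have hswap : ∑ i ∈ A, ∑ j ∈ A.filter (fun j => j < i), p i j
      = ∑ i ∈ A, ∑ j ∈ A.filter (fun j => i < j), p i j := by
    rw [Finset.sum_comm' (t' := A) (s' := fun j => A.filter (fun i => j < i))]
    · exact Finset.sum_congr rfl fun i _ =>
        Finset.sum_congr rfl fun j _ => hsymm j i
    · intro x y
      simp only [mem_filter]
      tauto
  rw [Finset.sum_congr rfl hsplit, Finset.sum_add_distrib, hswap]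
  ring

/-- Proposition 1 of the paper (branch-and-bound upper bound): for disjoint
`I`, `U` and a capacity-feasible pattern `P` with `I ⊆ P ⊆ I ∪ U`, if for each
`i ∈ U` the value `zKP i` is the optimal value of the 0-1 knapsack over
`U \ {i}` with profits `max 0 (p i j)`, weights `w j` and capacity
`W − Σ_{j∈I} w j − w i`, then with
`p̄ i = π i + Σ_{j∈I} p i j + (1/2)·zKP i` one has
`p(P) ≤ p(I) + Σ_{i∈P∩U} p̄ i`. -/
theorem bb_upper_bound_prop1
    (n : ℕ) (w : Fin n → ℝ) (W : ℝ) (hw : ∀ i, 0 < w i)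
    (π : Fin n → ℝ) (p : Fin n → Fin n → ℝ)
    (hsymm : ∀ i j, p i j = p j i)
    (I U : Finset (Fin n)) (hdisj : Disjoint I U)
    (zKP : Fin n → ℝ)
    (hzKP : ∀ i ∈ U, IsGreatest
      {v : ℝ | ∃ S : Finset (Fin n), S ⊆ U.erase i ∧
        ∑ j ∈ S, w j ≤ W - ∑ j ∈ I, w j - w i ∧
        v = ∑ j ∈ S, max 0 (p i j)} (zKP i))
    (P : Finset (Fin n)) (hIP : I ⊆ P) (hPIU : P ⊆ I ∪ U)
    (hPcap : ∑ i ∈ P, w i ≤ W) :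
    patternProfit n π p P ≤ patternProfit n π p I +
      ∑ i ∈ P ∩ U, (π i + ∑ j ∈ I, p i j + (1 / 2) * zKP i) := by
  classical
  set V : Finset (Fin n) := P ∩ U with hV
  have hVU : V ⊆ U := Finset.inter_subset_right
  have hVP : V ⊆ P := Finset.inter_subset_left
  have hdIV : Disjoint I V := hdisj.mono_right hVU
  have hPV : P = I ∪ V := by
    ext x
    simp only [Finset.mem_union, hV, Finset.mem_inter]
    constructor
    · intro hx
      rcases Finset.mem_union.mp (hPIU hx) with h | h
      · exact Or.inl h
      · exact Or.inr ⟨hx, h⟩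
    · rintro (h | ⟨h, _⟩)
      · exact hIP h
      · exact h
  -- weight decomposition
  have hwsum : ∑ i ∈ P, w i = ∑ i ∈ I, w i + ∑ i ∈ V, w i := by
    rw [hPV, Finset.sum_union hdIV]
  -- bound on the inner knapsack value
  have hknap : ∀ i ∈ V, ∑ j ∈ V.erase i, p i j ≤ zKP i := by
    intro i hi
    have hiU : i ∈ U := hVU hi
    have h1 : ∑ j ∈ V.erase i, p i j ≤ ∑ j ∈ V.erase i, max 0 (p i j) :=
      Finset.sum_le_sum fun j _ => le_max_right _ _
    refine h1.trans ((hzKP i hiU).2 ⟨V.erase i, ?_, ?_, rfl⟩)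
    · exact Finset.erase_subset_erase i hVU
    · have h2 : ∑ j ∈ V.erase i, w j + w i = ∑ j ∈ V, w j :=
        Finset.sum_erase_add _ _ hi
      linarith
  -- decompose the pairwise sums
  have hDP : ∑ i ∈ P, ∑ j ∈ P.erase i, p i j
      = ∑ i ∈ I, ∑ j ∈ I.erase i, p i j
        + ∑ i ∈ V, ∑ j ∈ V.erase i, p i j
        + 2 * ∑ i ∈ V, ∑ j ∈ I, p i j := by
    have hcross : ∑ i ∈ I, ∑ j ∈ V, p i j = ∑ i ∈ V, ∑ j ∈ I, p i j := by
      rw [Finset.sum_comm]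
      exact Finset.sum_congr rfl fun i _ =>
        Finset.sum_congr rfl fun j _ => hsymm j i
    have e1 : ∀ i ∈ I, P.erase i = I.erase i ∪ V := by
      intro i hi
      rw [hPV, Finset.erase_union_distrib,
        Finset.erase_eq_of_notMem (Finset.disjoint_left.mp hdIV hi)]
    have e2 : ∀ i ∈ V, P.erase i = I ∪ V.erase i := by
      intro i hi
      rw [hPV, Finset.erase_union_distrib,
        Finset.erase_eq_of_notMem (Finset.disjoint_right.mp hdIV hi)]
    have s1 : ∑ i ∈ I, ∑ j ∈ P.erase i, p i j
        = ∑ i ∈ I, (∑ j ∈ I.erase i, p i j + ∑ j ∈ V, p i j) :=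
      Finset.sum_congr rfl fun i hi => by
        rw [e1 i hi,
          Finset.sum_union (Finset.disjoint_of_subset_left (Finset.erase_subset _ _) hdIV)]
    have s2 : ∑ i ∈ V, ∑ j ∈ P.erase i, p i j
        = ∑ i ∈ V, (∑ j ∈ I, p i j + ∑ j ∈ V.erase i, p i j) :=
      Finset.sum_congr rfl fun i hi => by
        rw [e2 i hi,
          Finset.sum_union (Finset.disjoint_of_subset_right (Finset.erase_subset _ _) hdIV)]
    have s0 : ∑ i ∈ P, ∑ j ∈ P.erase i, p i j
        = ∑ i ∈ I, ∑ j ∈ P.erase i, p i j + ∑ i ∈ V, ∑ j ∈ P.erase i, p i j := by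
      nth_rewrite 1 [hPV]
      rw [Finset.sum_union hdIV]
    rw [s0, s1, s2, Finset.sum_add_distrib, Finset.sum_add_distrib, hcross]
    ring
  -- put everything together
  unfold patternProfit
  rw [half_sum n p hsymm P, half_sum n p hsymm I, hDP]
  have hπ : ∑ i ∈ P, π i = ∑ i ∈ I, π i + ∑ i ∈ V, π i := by
    rw [hPV, Finset.sum_union hdIV]
  rw [hπ]
  have hrhs : ∑ i ∈ P ∩ U, (π i + ∑ j ∈ I, p i j + (1 / 2) * zKP i)
      = ∑ i ∈ V, π i + ∑ i ∈ V, ∑ j ∈ I, p i j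
        + (1 / 2) * ∑ i ∈ V, zKP i := by
    rw [← hV, Finset.mul_sum, ← Finset.sum_add_distrib, ← Finset.sum_add_distrib]
  rw [hrhs]
  have hb : ∑ i ∈ V, ∑ j ∈ V.erase i, p i j ≤ ∑ i ∈ V, zKP i :=
    Finset.sum_le_sum hknap
  linarith
end

section
/- Branch-and-bound node bound (Proposition 2 of the paper): with the notation of Proposition 1, the value UB = p(I) + max{ Σ_{j∈P'∩U} p̄_j : P' capacity-feasible, I ⊆ P' ⊆ I ∪ U } is an upper bound on the maximum of p(P) over all capacity-feasible patterns P with I ⊆ P ⊆ I ∪ U. -/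
open Finset

lemma pair_half (n : ℕ) (p : Fin n → Fin n → ℝ) (hsymm : ∀ i j, p i j = p j i)
    (A : Finset (Fin n)) :
    ∑ i ∈ A, ∑ j ∈ A.filter (fun j => i < j), p i j
      = (1/2) * ∑ i ∈ A, ∑ j ∈ A, (if i ≠ j then p i j else 0) := by
  have split : ∀ i j : Fin n, (if i ≠ j then p i j else 0)
      = (if i < j then p i j else 0) + (if j < i then p i j else 0) := by
    intro i j
    rcases lt_trichotomy i j with h | h | h
    · simp [h, h.ne, asymm h]
    · simp [h]
    · simp [h, h.ne', asymm h]
  have swap : ∑ i ∈ A, ∑ j ∈ A, (if j < i then p i j else 0)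
      = ∑ i ∈ A, ∑ j ∈ A, (if i < j then p i j else 0) := by
    rw [Finset.sum_comm]
    refine sum_congr rfl fun i _ => sum_congr rfl fun j _ => ?_
    split <;> simp [hsymm]
  have hT : ∑ i ∈ A, ∑ j ∈ A.filter (fun j => i < j), p i j
      = ∑ i ∈ A, ∑ j ∈ A, (if i < j then p i j else 0) := by
    refine sum_congr rfl fun i _ => ?_
    rw [sum_filter]
  rw [hT]
  simp only [split, Finset.sum_add_distrib, swap]
  ring

/-- Proposition 2 of the paper (branch-and-bound node bound): with `p̄` as in
Proposition 1, the value
`UB = p(I) + max{ Σ_{j∈P'∩U} p̄ j : P' capacity-feasible, I ⊆ P' ⊆ I ∪ U }`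
upper bounds `p(P)` over all capacity-feasible patterns `P` with
`I ⊆ P ⊆ I ∪ U`. -/
theorem bb_node_bound_prop2
    (n : ℕ) (w : Fin n → ℝ) (W : ℝ) (hw : ∀ i, 0 < w i)
    (π : Fin n → ℝ) (p : Fin n → Fin n → ℝ)
    (hsymm : ∀ i j, p i j = p j i)
    (I U : Finset (Fin n)) (hdisj : Disjoint I U)
    (zKP : Fin n → ℝ)
    (hzKP : ∀ i ∈ U, IsGreatest
      {v : ℝ | ∃ S : Finset (Fin n), S ⊆ U.erase i ∧
        ∑ j ∈ S, w j ≤ W - ∑ j ∈ I, w j - w i ∧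
        v = ∑ j ∈ S, max 0 (p i j)} (zKP i))
    (M : ℝ)
    (hM : IsGreatest
      {v : ℝ | ∃ P' : Finset (Fin n), I ⊆ P' ∧ P' ⊆ I ∪ U ∧
        ∑ i ∈ P', w i ≤ W ∧
        v = ∑ j ∈ P' ∩ U, (π j + ∑ l ∈ I, p j l + (1 / 2) * zKP j)} M) :
    ∀ P : Finset (Fin n), I ⊆ P → P ⊆ I ∪ U → ∑ i ∈ P, w i ≤ W →
      patternProfit n π p P ≤ patternProfit n π p I + M := by
  intro P hIP hPIU hPw
  set Q := P ∩ U with hQdef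
  have hQU : Q ⊆ U := inter_subset_right
  have hdisjIQ : Disjoint I Q := hdisj.mono_right hQU
  have hPeq : P = I ∪ Q := by
    ext x
    simp only [hQdef, mem_union, mem_inter]
    constructor
    · intro hx
      rcases mem_union.mp (hPIU hx) with h | h
      · exact Or.inl h
      · exact Or.inr ⟨hx, h⟩
    · rintro (h | ⟨h, _⟩)
      · exact hIP h
      · exact h
  -- weight bound on Q
  have hwsum : ∑ j ∈ I, w j + ∑ j ∈ Q, w j ≤ W := by
    rw [← sum_union hdisjIQ, ← hPeq]; exact hPw
  -- decomposition of the off-diagonal sum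
  have hD : ∑ i ∈ P, ∑ j ∈ P, (if i ≠ j then p i j else 0)
      = ∑ i ∈ I, ∑ j ∈ I, (if i ≠ j then p i j else 0)
        + ∑ i ∈ Q, ∑ j ∈ Q, (if i ≠ j then p i j else 0)
        + 2 * ∑ j ∈ Q, ∑ l ∈ I, p j l := by
    have hne : ∀ i ∈ I, ∀ j ∈ Q, i ≠ j := by
      intro i hi j hj h; subst h
      exact (Finset.disjoint_left.mp hdisjIQ hi) hj
    have hIQ : ∑ i ∈ I, ∑ j ∈ Q, (if i ≠ j then p i j else 0)
        = ∑ j ∈ Q, ∑ l ∈ I, p j l := by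
      rw [Finset.sum_comm]
      refine sum_congr rfl fun j hj => sum_congr rfl fun i hi => ?_
      rw [if_pos (hne i hi j hj), hsymm]
    have hQI : ∑ i ∈ Q, ∑ j ∈ I, (if i ≠ j then p i j else 0)
        = ∑ j ∈ Q, ∑ l ∈ I, p j l := by
      refine sum_congr rfl fun j hj => sum_congr rfl fun i hi => ?_
      rw [if_pos (Ne.symm (hne i hi j hj))]
    rw [hPeq, sum_union hdisjIQ]
    have hin : ∀ i : Fin n, ∑ j ∈ I ∪ Q, (if i ≠ j then p i j else 0)
        = ∑ j ∈ I, (if i ≠ j then p i j else 0) + ∑ j ∈ Q, (if i ≠ j then p i j else 0) :=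
      fun i => sum_union hdisjIQ
    simp only [hin]
    rw [Finset.sum_add_distrib, Finset.sum_add_distrib, hIQ, hQI]
    ring
  -- bound on the within-Q pair term
  have hQbound : ∑ i ∈ Q, ∑ j ∈ Q, (if i ≠ j then p i j else 0)
      ≤ ∑ j ∈ Q, zKP j := by
    refine sum_le_sum fun i hi => ?_
    have hiU : i ∈ U := hQU hi
    have h1 : ∑ j ∈ Q, (if i ≠ j then p i j else 0)
        ≤ ∑ j ∈ Q.erase i, max 0 (p i j) := by
      have : ∑ j ∈ Q, (if i ≠ j then p i j else 0)
          = ∑ j ∈ Q.erase i, p i j := by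
        rw [← Finset.filter_ne, sum_filter]
      rw [this]
      exact sum_le_sum fun j _ => le_max_right _ _
    refine h1.trans ?_
    refine (hzKP i hiU).2 ?_
    refine ⟨Q.erase i, fun x hx => ?_, ?_, rfl⟩
    · exact mem_erase.mpr ⟨(mem_erase.mp hx).1, hQU (mem_erase.mp hx).2⟩
    · have : ∑ j ∈ Q.erase i, w j = ∑ j ∈ Q, w j - w i := by
        rw [Finset.sum_erase_eq_sub hi]
      rw [this]; linarith
  -- M bounds the bar-profit sum
  have hMb : ∑ j ∈ Q, (π j + ∑ l ∈ I, p j l + (1 / 2) * zKP j) ≤ M :=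
    hM.2 ⟨P, hIP, hPIU, hPw, rfl⟩
  -- put everything together
  have e1 := pair_half n p hsymm P
  have e2 := pair_half n p hsymm I
  unfold patternProfit
  rw [e1, e2, hD, hPeq, sum_union hdisjIQ]
  have expand : ∑ j ∈ Q, (π j + ∑ l ∈ I, p j l + (1 / 2) * zKP j)
      = ∑ j ∈ Q, π j + ∑ j ∈ Q, ∑ l ∈ I, p j l + (1/2) * ∑ j ∈ Q, zKP j := by
    rw [Finset.sum_add_distrib, Finset.sum_add_distrib, ← Finset.mul_sum]
  rw [expand] at hMb
  linarith
end
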